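/- arXiv:2505.15476 — 9 statements merged into one kernel-verified Lean document; each statement's English description precedes it below -/
import Mathlib

section
/- Decryption correctness of the Paillier cryptosystem: let N = PQ with P, Q distinct odd primes, let α, β be positive integers with 4αβ = (P−1)(Q−1) and gcd(2α, N) = 1, let y be coprime to N, let h be an integer with h ≡ −y^(2β) (mod N), and let m < N and r be natural numbers. If c = (1+N)^m · (h^r mod N)^N mod N², then c^(2α) ≡ 1 + (2α·m mod N)·N (mod N²), and hence (((c^(2α) mod N²) − 1)/N mod N) · ((2α)^(−1) mod N) mod N = m. -/
private lemma pow_one_add_aux (x : ℤ) (n : ℕ) :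
    (1 + x) ^ n ≡ 1 + n * x [ZMOD x ^ 2] := by
  induction n with
  | zero => simp
  | succ n ih =>
    have : (1 + x) ^ (n + 1) = (1 + x) ^ n * (1 + x) := pow_succ _ _
    rw [this]
    calc (1 + x) ^ n * (1 + x) ≡ (1 + n * x) * (1 + x) [ZMOD x ^ 2] :=
          ih.mul_right _
      _ ≡ 1 + (n + 1 : ℕ) * x [ZMOD x ^ 2] := by
          have : (1 + (n : ℤ) * x) * (1 + x) = (1 + ((n : ℕ) + 1 : ℕ) * x) + n * x ^ 2 := by
            push_cast; ring
          rw [this]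
          simpa using (Int.modEq_iff_dvd.mpr ⟨-(n : ℤ), by ring⟩)

/-- Decryption correctness of the Paillier cryptosystem. -/
theorem paillier_dec_correct (P Q : ℕ) (hP : P.Prime) (hQ : Q.Prime)
    (hPodd : Odd P) (hQodd : Odd Q) (hPQ : P ≠ Q)
    (N : ℕ) (hN : N = P * Q)
    (α β : ℕ) (hα : 0 < α) (hβ : 0 < β)
    (hαβ : 4 * α * β = (P - 1) * (Q - 1))
    (hco : Nat.gcd (2 * α) N = 1)
    (y : ℤ) (hy : IsCoprime y (N : ℤ))
    (h : ℤ) (hh : h ≡ -y ^ (2 * β) [ZMOD (N : ℤ)])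
    (m r : ℕ) (hm : m < N)
    (u : ℕ) (hu : u < N) (huinv : 2 * α * u % N = 1)
    (c : ℤ) (hc : c = (1 + (N : ℤ)) ^ m * (h ^ r % (N : ℤ)) ^ N % (N : ℤ) ^ 2) :
    c ^ (2 * α) ≡ 1 + ((2 * α * m % N : ℕ) : ℤ) * (N : ℤ) [ZMOD ((N : ℤ) ^ 2)] ∧
      (c ^ (2 * α) % (N : ℤ) ^ 2 - 1) / (N : ℤ) % (N : ℤ) * (u : ℤ) % (N : ℤ)
        = (m : ℤ) := by
  have hN2 : 2 ≤ N := by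
    rw [hN]; calc 2 ≤ 2 * 2 := by norm_num
      _ ≤ P * Q := Nat.mul_le_mul hP.two_le hQ.two_le
  have hNpos : (0 : ℤ) < (N : ℤ) := by exact_mod_cast Nat.lt_of_lt_of_le Nat.zero_lt_two hN2
  set t : ℕ := 2 * α * m % N with ht
  have htN : t < N := Nat.mod_lt _ (by omega)
  -- Fermat on both primes
  have hPdvd : ((P : ℤ)) ∣ (N : ℤ) := by exact_mod_cast (Dvd.intro Q hN.symm)
  have hQdvd : ((Q : ℤ)) ∣ (N : ℤ) := by exact_mod_cast (Dvd.intro_left P hN.symm)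
  have hyP : IsCoprime y (P : ℤ) := hy.of_isCoprime_of_dvd_right hPdvd
  have hyQ : IsCoprime y (Q : ℤ) := hy.of_isCoprime_of_dvd_right hQdvd
  have hfermatP : y ^ ((P - 1) * (Q - 1)) ≡ 1 [ZMOD (P : ℤ)] := by
    have := (Int.ModEq.pow_card_sub_one_eq_one hP hyP).pow (Q - 1)
    simpa [← pow_mul] using this
  have hfermatQ : y ^ ((P - 1) * (Q - 1)) ≡ 1 [ZMOD (Q : ℤ)] := by
    have := (Int.ModEq.pow_card_sub_one_eq_one hQ hyQ).pow (P - 1)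
    simpa [← pow_mul, mul_comm] using this
  have hcop : ((P : ℤ)).natAbs.Coprime ((Q : ℤ)).natAbs := by
    simpa using (Nat.coprime_primes hP hQ).mpr hPQ
  have heuler : y ^ ((P - 1) * (Q - 1)) ≡ 1 [ZMOD (N : ℤ)] := by
    have := (Int.modEq_and_modEq_iff_modEq_mul hcop).mp ⟨hfermatP, hfermatQ⟩
    rw [hN]; exact_mod_cast this
  -- h ^ (2α) ≡ 1 mod N
  have hh2a : h ^ (2 * α) ≡ 1 [ZMOD (N : ℤ)] := by
    calc h ^ (2 * α) ≡ (-y ^ (2 * β)) ^ (2 * α) [ZMOD (N : ℤ)] := hh.pow _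
      _ = y ^ ((P - 1) * (Q - 1)) := by
          rw [← hαβ, Even.neg_pow ⟨α, two_mul α⟩, ← pow_mul]
          congr 1
          ring
      _ ≡ 1 [ZMOD (N : ℤ)] := heuler
  set a : ℤ := h ^ r % (N : ℤ) with ha
  have ha2a : a ^ (2 * α) ≡ 1 [ZMOD (N : ℤ)] := by
    have h1 : a ≡ h ^ r [ZMOD (N : ℤ)] := Int.emod_emod_of_dvd _ dvd_rfl
    calc a ^ (2 * α) ≡ (h ^ r) ^ (2 * α) [ZMOD (N : ℤ)] := h1.pow _
      _ = (h ^ (2 * α)) ^ r := by rw [← pow_mul, ← pow_mul, mul_comm]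
      _ ≡ 1 ^ r [ZMOD (N : ℤ)] := hh2a.pow _
      _ = 1 := one_pow _
  obtain ⟨k, hk⟩ : ((N : ℤ)) ∣ a ^ (2 * α) - 1 := Int.ModEq.dvd ha2a.symm
  have haN : (a ^ (2 * α)) ^ N ≡ 1 [ZMOD ((N : ℤ)) ^ 2] := by
    have hak : a ^ (2 * α) = 1 + (N : ℤ) * k := by linarith [hk]
    have hb := pow_one_add_aux ((N : ℤ) * k) N
    have hdvd : ((N : ℤ)) ^ 2 ∣ ((N : ℤ) * k) ^ 2 := ⟨k ^ 2, by ring⟩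
    calc (a ^ (2 * α)) ^ N = (1 + (N : ℤ) * k) ^ N := by rw [hak]
      _ ≡ 1 + N * ((N : ℤ) * k) [ZMOD ((N : ℤ)) ^ 2] := hb.of_dvd hdvd
      _ ≡ 1 [ZMOD ((N : ℤ)) ^ 2] := (Int.modEq_iff_dvd.mpr ⟨-k, by ring⟩)
  have h1N : (1 + (N : ℤ)) ^ (2 * α * m) ≡ 1 + ((t : ℤ)) * N [ZMOD ((N : ℤ)) ^ 2] := by
    calc (1 + (N : ℤ)) ^ (2 * α * m) ≡ 1 + (2 * α * m : ℕ) * N [ZMOD ((N : ℤ)) ^ 2] :=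
          pow_one_add_aux (N : ℤ) (2 * α * m)
      _ ≡ 1 + (t : ℤ) * N [ZMOD ((N : ℤ)) ^ 2] := by
          have hd : ((N : ℤ)) ∣ ((2 * α * m : ℕ) : ℤ) - (t : ℤ) := by
            have h1 : ((2 * α * m : ℕ) : ℤ) % (N : ℤ) = (t : ℤ) := by
              rw [ht]; push_cast; ring
            exact Int.dvd_self_sub_of_emod_eq h1
          obtain ⟨d, hd⟩ := hd
          exact Int.modEq_iff_dvd.mpr ⟨-d, by rw [show (1 + (t:ℤ)*N) - (1 + ((2*α*m : ℕ):ℤ)*N) = -((((2*α*m : ℕ):ℤ) - t) * N) by ring, hd]; ring⟩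
  have hcc : c ≡ (1 + (N : ℤ)) ^ m * a ^ N [ZMOD ((N : ℤ)) ^ 2] := by
    rw [hc]; exact Int.emod_emod_of_dvd _ dvd_rfl
  have part1 : c ^ (2 * α) ≡ 1 + ((t : ℤ)) * N [ZMOD ((N : ℤ)) ^ 2] := by
    calc c ^ (2 * α) ≡ ((1 + (N : ℤ)) ^ m * a ^ N) ^ (2 * α) [ZMOD ((N : ℤ)) ^ 2] :=
          hcc.pow _
      _ = (1 + (N : ℤ)) ^ (2 * α * m) * (a ^ (2 * α)) ^ N := by
          rw [mul_pow, ← pow_mul, ← pow_mul, ← pow_mul]; ring_nf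
      _ ≡ (1 + (t : ℤ) * N) * 1 [ZMOD ((N : ℤ)) ^ 2] := h1N.mul haN
      _ = 1 + (t : ℤ) * N := by ring
  refine ⟨part1, ?_⟩
  have hmod : c ^ (2 * α) % ((N : ℤ)) ^ 2 = 1 + (t : ℤ) * N := by
    have h1 := part1
    rw [Int.ModEq] at h1
    rw [h1]
    have ht' : (t : ℤ) ≤ (N : ℤ) - 1 := by
      have : (t : ℤ) < (N : ℤ) := by exact_mod_cast htN
      omega
    exact Int.emod_eq_of_lt (by positivity) (by nlinarith [hNpos])
  rw [hmod]
  have hdiv : (1 + (t : ℤ) * N - 1) / (N : ℤ) = t := by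
    rw [show (1 + (t : ℤ) * N - 1) = (N : ℤ) * t by ring]
    exact Int.mul_ediv_cancel_left _ (by positivity)
  rw [hdiv]
  have htmod : (t : ℤ) % (N : ℤ) = t := Int.emod_eq_of_lt (by positivity) (by exact_mod_cast htN)
  rw [htmod]
  have hnat : ((t * u) % N : ℕ) = m := by
    calc (t * u) % N = (2 * α * m * u) % N := by rw [ht]; exact Nat.mod_mul_mod _ _ _
      _ = (2 * α * u * m) % N := by rw [show 2 * α * m * u = 2 * α * u * m from by ring]
      _ = ((2 * α * u) % N * m) % N := (Nat.mod_mul_mod _ _ _).symm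
      _ = m := by rw [huinv, one_mul]; exact Nat.mod_eq_of_lt hm
  exact_mod_cast congrArg (Nat.cast : ℕ → ℤ) hnat
end

section
/- Threshold decryption correctness: let N = PQ with P, Q distinct odd primes, let α, β be positive integers with 4αβ = (P−1)(Q−1) and gcd(2α, N) = 1, let y be coprime to N, let h ≡ −y^(2β) (mod N), and let m < N. Let c = (1+N)^m · (h^r mod N)^N mod N², and let sk₁, sk₂ be natural numbers with sk₁ + sk₂ ≡ 0 (mod 2α) and sk₁ + sk₂ ≡ 1 (mod N). Setting M₁ = c^(sk₁) mod N² and M₂ = c^(sk₂) mod N², we have M₁·M₂ ≡ 1 + m·N (mod N²), and hence ((M₁·M₂ mod N²) − 1)/N mod N = m. -/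
/-- If `a ≡ b` mod `N`, then `a ^ N ≡ b ^ N` mod `N ^ 2`. -/
lemma aux_pow_lift (N : ℕ) (a b : ℤ) (hab : a ≡ b [ZMOD (N : ℤ)]) :
    a ^ N ≡ b ^ N [ZMOD (N : ℤ) ^ 2] := by
  have hsum : (N : ℤ) ∣ ∑ i ∈ Finset.range N, a ^ i * b ^ (N - 1 - i) := by
    rw [← ZMod.intCast_zmod_eq_zero_iff_dvd]
    push_cast
    have hA : ((a : ZMod N)) = (b : ZMod N) := (ZMod.intCast_eq_intCast_iff _ _ _).mpr hab
    rw [hA]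
    calc (∑ i ∈ Finset.range N, (b : ZMod N) ^ i * (b : ZMod N) ^ (N - 1 - i))
        = ∑ _i ∈ Finset.range N, (b : ZMod N) ^ (N - 1) := by
          refine Finset.sum_congr rfl fun i hi => ?_
          rw [← pow_add]
          congr 1
          have := Finset.mem_range.mp hi
          omega
      _ = (N : ZMod N) * (b : ZMod N) ^ (N - 1) := by
          simp [Finset.sum_const, nsmul_eq_mul]
      _ = 0 := by simp [ZMod.natCast_self]
  have hdiff : (N : ℤ) ∣ a - b := Int.ModEq.dvd hab.symm
  have key : (N : ℤ) ^ 2 ∣ a ^ N - b ^ N := by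
    rw [← geom_sum₂_mul a b N, sq]
    exact mul_dvd_mul hsum hdiff
  exact (Int.modEq_iff_dvd.mpr (by simpa using key)).symm

/-- Binomial: `(1 + n) ^ m ≡ 1 + m * n` mod `n ^ 2`. -/
lemma aux_binom (n : ℤ) (m : ℕ) : (1 + n) ^ m ≡ 1 + (m : ℤ) * n [ZMOD n ^ 2] := by
  induction m with
  | zero => simp
  | succ k ih =>
    have h1 : (1 + n) ^ (k + 1) ≡ (1 + (k : ℤ) * n) * (1 + n) [ZMOD n ^ 2] := by
      rw [pow_succ (1 + n) k]
      exact ih.mul_right _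
    refine h1.trans ?_
    have : (1 + (k : ℤ) * n) * (1 + n) - (1 + ((k : ℤ) + 1) * n) = k * n ^ 2 := by ring
    have hdvd : n ^ 2 ∣ (1 + (k : ℤ) * n) * (1 + n) - (1 + ((k : ℤ) + 1) * n) := by
      rw [this]; exact Dvd.dvd.mul_left dvd_rfl _
    push_cast
    exact (Int.modEq_iff_dvd.mpr (by simpa using hdvd)).symm

/-- Threshold decryption correctness of the (2,2)-threshold Paillier
cryptosystem. -/
theorem paillier_threshold_dec_correct (P Q : ℕ) (hP : P.Prime) (hQ : Q.Prime)
    (hPodd : Odd P) (hQodd : Odd Q) (hPQ : P ≠ Q)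
    (N : ℕ) (hN : N = P * Q)
    (α β : ℕ) (hα : 0 < α) (hβ : 0 < β)
    (hαβ : 4 * α * β = (P - 1) * (Q - 1))
    (hco : Nat.gcd (2 * α) N = 1)
    (y : ℤ) (hy : IsCoprime y (N : ℤ))
    (h : ℤ) (hh : h ≡ -y ^ (2 * β) [ZMOD (N : ℤ)])
    (m r : ℕ) (hm : m < N)
    (c : ℤ) (hc : c = (1 + (N : ℤ)) ^ m * (h ^ r % (N : ℤ)) ^ N % (N : ℤ) ^ 2)
    (sk₁ sk₂ : ℕ)
    (hsk0 : sk₁ + sk₂ ≡ 0 [MOD 2 * α])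
    (hsk1 : sk₁ + sk₂ ≡ 1 [MOD N])
    (M₁ M₂ : ℤ)
    (hM₁ : M₁ = c ^ sk₁ % (N : ℤ) ^ 2)
    (hM₂ : M₂ = c ^ sk₂ % (N : ℤ) ^ 2) :
    M₁ * M₂ ≡ 1 + (m : ℤ) * (N : ℤ) [ZMOD ((N : ℤ) ^ 2)] ∧
      (M₁ * M₂ % (N : ℤ) ^ 2 - 1) / (N : ℤ) % (N : ℤ) = (m : ℤ) := by
  -- basic facts about N
  have hP3 : 3 ≤ P := by
    have h2 := hP.two_le
    obtain ⟨t, ht⟩ := hPodd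
    omega
  have hQ3 : 3 ≤ Q := by
    have h2 := hQ.two_le
    obtain ⟨t, ht⟩ := hQodd
    omega
  have hN9 : 9 ≤ N := by rw [hN]; exact Nat.mul_le_mul hP3 hQ3
  have hN1 : 1 < N := by omega
  -- Euler: y ^ totient N ≡ 1 mod N
  have htot : Nat.totient N = (P - 1) * (Q - 1) := by
    subst hN
    rw [Nat.totient_mul ((Nat.coprime_primes hP hQ).mpr hPQ),
      Nat.totient_prime hP, Nat.totient_prime hQ]
  have hyunit : IsUnit ((y : ZMod N)) := by
    have hmap := hy.map (Int.castRingHom (ZMod N))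
    simp only [eq_intCast, Int.cast_natCast, ZMod.natCast_self] at hmap
    exact isCoprime_zero_right.mp hmap
  have heuler : y ^ ((P - 1) * (Q - 1)) ≡ 1 [ZMOD (N : ℤ)] := by
    rw [← ZMod.intCast_eq_intCast_iff]
    push_cast
    rw [← htot]
    obtain ⟨u, hu⟩ := hyunit
    rw [← hu, ← Units.val_pow_eq_pow_val, ZMod.pow_totient u, Units.val_one]
  -- h ^ (2α) ≡ 1 mod N
  have hh2a : h ^ (2 * α) ≡ 1 [ZMOD (N : ℤ)] := by
    have h1 : h ^ (2 * α) ≡ (-y ^ (2 * β)) ^ (2 * α) [ZMOD (N : ℤ)] := hh.pow _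
    have h2 : (-y ^ (2 * β)) ^ (2 * α) = y ^ ((P - 1) * (Q - 1)) := by
      rw [← hαβ]
      rw [neg_pow, ← pow_mul]
      have : (-1 : ℤ) ^ (2 * α) = 1 := by
        rw [pow_mul]; simp
      rw [this, one_mul]
      ring_nf
    rw [h2] at h1
    exact h1.trans heuler
  -- s := sk₁ + sk₂ ; h ^ s ≡ 1 mod N
  set s := sk₁ + sk₂ with hs
  obtain ⟨k, hk⟩ : 2 * α ∣ s := (Nat.modEq_zero_iff_dvd).mp hsk0
  have hhs : h ^ s ≡ 1 [ZMOD (N : ℤ)] := by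
    rw [hk, pow_mul]
    calc (h ^ (2 * α)) ^ k ≡ 1 ^ k [ZMOD (N : ℤ)] := hh2a.pow k
      _ = 1 := one_pow k
  -- X := h ^ r % N ; X ^ s ≡ 1 mod N
  set X : ℤ := h ^ r % (N : ℤ) with hX
  have hXmod : X ≡ h ^ r [ZMOD (N : ℤ)] := Int.mod_modEq _ _
  have hXs : X ^ s ≡ 1 [ZMOD (N : ℤ)] := by
    calc X ^ s ≡ (h ^ r) ^ s [ZMOD (N : ℤ)] := hXmod.pow s
      _ = (h ^ s) ^ r := by rw [← pow_mul, ← pow_mul, Nat.mul_comm]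
      _ ≡ 1 ^ r [ZMOD (N : ℤ)] := hhs.pow r
      _ = 1 := one_pow r
  -- X ^ (s * N) ≡ 1 mod N²
  have hXsN : X ^ (s * N) ≡ 1 [ZMOD (N : ℤ) ^ 2] := by
    have := aux_pow_lift N (X ^ s) 1 hXs
    rw [one_pow] at this
    rw [pow_mul]
    exact this
  -- c ≡ (1+N)^m * X^N mod N²
  have hcmod : c ≡ (1 + (N : ℤ)) ^ m * X ^ N [ZMOD (N : ℤ) ^ 2] := by
    rw [hc]; exact Int.mod_modEq _ _
  -- c ^ s ≡ 1 + m*N mod N²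
  have hms : (m : ℤ) * (s : ℤ) ≡ (m : ℤ) [ZMOD (N : ℤ)] := by
    have h1 : (s : ℤ) ≡ 1 [ZMOD (N : ℤ)] := by
      exact_mod_cast Int.natCast_modEq_iff.mpr hsk1
    calc (m : ℤ) * (s : ℤ) ≡ (m : ℤ) * 1 [ZMOD (N : ℤ)] := h1.mul_left _
      _ = (m : ℤ) := mul_one _
  have hcs : c ^ s ≡ 1 + (m : ℤ) * (N : ℤ) [ZMOD (N : ℤ) ^ 2] := by
    calc c ^ s ≡ ((1 + (N : ℤ)) ^ m * X ^ N) ^ s [ZMOD (N : ℤ) ^ 2] := hcmod.pow s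
      _ = (1 + (N : ℤ)) ^ (m * s) * X ^ (s * N) := by
          rw [mul_pow, ← pow_mul, ← pow_mul]; ring_nf
      _ ≡ (1 + ((m * s : ℕ) : ℤ) * (N : ℤ)) * 1 [ZMOD (N : ℤ) ^ 2] :=
          (aux_binom (N : ℤ) (m * s)).mul hXsN
      _ = 1 + ((m : ℤ) * (s : ℤ)) * (N : ℤ) := by push_cast; ring
      _ ≡ 1 + (m : ℤ) * (N : ℤ) [ZMOD (N : ℤ) ^ 2] := by
          have hdvd : (N : ℤ) ^ 2 ∣ ((m : ℤ) * (s : ℤ)) * (N : ℤ) - (m : ℤ) * (N : ℤ) := by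
            have := hms.dvd
            rw [sq]
            have : ((m : ℤ) * (s : ℤ)) * (N : ℤ) - (m : ℤ) * (N : ℤ)
                = ((m : ℤ) - (m : ℤ) * (s : ℤ)) * (-(N : ℤ)) := by ring
            rw [this]
            exact mul_dvd_mul hms.dvd ((dvd_neg).mpr dvd_rfl)
          exact (Int.modEq_iff_dvd.mpr (by simpa using hdvd)).symm
  -- M₁ * M₂ ≡ c ^ s mod N²
  have hMM : M₁ * M₂ ≡ 1 + (m : ℤ) * (N : ℤ) [ZMOD (N : ℤ) ^ 2] := by
    have h1 : M₁ * M₂ ≡ c ^ sk₁ * c ^ sk₂ [ZMOD (N : ℤ) ^ 2] := by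
      rw [hM₁, hM₂]
      exact (Int.mod_modEq _ _).mul (Int.mod_modEq _ _)
    have h2 : c ^ sk₁ * c ^ sk₂ = c ^ s := by rw [← pow_add]
    rw [h2] at h1
    exact h1.trans hcs
  refine ⟨hMM, ?_⟩
  have hNpos : (0 : ℤ) < (N : ℤ) := by exact_mod_cast (by omega : 0 < N)
  have hval : M₁ * M₂ % (N : ℤ) ^ 2 = 1 + (m : ℤ) * (N : ℤ) := by
    have := hMM
    unfold Int.ModEq at this
    rw [this]
    apply Int.emod_eq_of_lt
    · positivity
    · have hmN : (m : ℤ) ≤ (N : ℤ) - 1 := by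
        have : (m : ℤ) < (N : ℤ) := by exact_mod_cast hm
        omega
      calc 1 + (m : ℤ) * (N : ℤ) ≤ 1 + ((N : ℤ) - 1) * (N : ℤ) :=
            by nlinarith
        _ < (N : ℤ) ^ 2 := by nlinarith
  rw [hval]
  have : (1 + (m : ℤ) * (N : ℤ) - 1) = (m : ℤ) * (N : ℤ) := by ring
  rw [this, Int.mul_ediv_cancel _ (by omega)]
  apply Int.emod_eq_of_lt
  · positivity
  · exact_mod_cast hm
end

section
/- Additive homomorphism of the Paillier cryptosystem: under the setup of the decryption-correctness theorem, if c₁ = (1+N)^(m₁) · (h^(r₁) mod N)^N mod N² and c₂ = (1+N)^(m₂) · (h^(r₂) mod N)^N mod N² are ciphertexts of m₁ < N and m₂ < N, then applying the decryption procedure (raising to 2α, applying the function x ↦ (x−1)/N modulo N, and multiplying by (2α)^(−1) mod N) to c₁·c₂ mod N² yields (m₁ + m₂) mod N. -/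
/-- Binomial congruence: `(1+a)^k ≡ 1 + k*a` modulo `a^2`. -/
lemma paillier_pow_one_add (a : ℤ) (k : ℕ) :
    (1 + a) ^ k ≡ 1 + (k : ℤ) * a [ZMOD a ^ 2] := by
  induction k with
  | zero => simp
  | succ k ih =>
    calc (1 + a) ^ (k + 1) = (1 + a) ^ k * (1 + a) := pow_succ _ _
      _ ≡ (1 + (k : ℤ) * a) * (1 + a) [ZMOD a ^ 2] := ih.mul_right _
      _ ≡ 1 + ((k : ℕ) + 1 : ℤ) * a [ZMOD a ^ 2] := by
          have heq : (1 + (k : ℤ) * a) * (1 + a)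
              = 1 + ((k : ℤ) + 1) * a + k * a ^ 2 := by ring
          rw [heq]
          have hdvd : a ^ 2 ∣ (1 + ((k : ℤ) + 1) * a)
              - (1 + ((k : ℤ) + 1) * a + k * a ^ 2) := ⟨-k, by ring⟩
          exact (Int.modEq_iff_dvd.mpr hdvd)
      _ = 1 + ((k + 1 : ℕ) : ℤ) * a := by push_cast; ring

set_option maxHeartbeats 1600000 in
/-- Additive homomorphism of the Paillier cryptosystem: decrypting
`c₁·c₂ mod N²` yields `(m₁ + m₂) mod N`. -/
theorem paillier_add_homomorphism (P Q : ℕ) (hP : P.Prime) (hQ : Q.Prime)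
    (hPodd : Odd P) (hQodd : Odd Q) (hPQ : P ≠ Q)
    (N : ℕ) (hN : N = P * Q)
    (α β : ℕ) (hα : 0 < α) (hβ : 0 < β)
    (hαβ : 4 * α * β = (P - 1) * (Q - 1))
    (hco : Nat.gcd (2 * α) N = 1)
    (y : ℤ) (hy : IsCoprime y (N : ℤ))
    (h : ℤ) (hh : h ≡ -y ^ (2 * β) [ZMOD (N : ℤ)])
    (m₁ m₂ r₁ r₂ : ℕ) (hm₁ : m₁ < N) (hm₂ : m₂ < N)
    (u : ℕ) (hu : u < N) (huinv : 2 * α * u % N = 1)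
    (c₁ c₂ : ℤ)
    (hc₁ : c₁ = (1 + (N : ℤ)) ^ m₁ * (h ^ r₁ % (N : ℤ)) ^ N % (N : ℤ) ^ 2)
    (hc₂ : c₂ = (1 + (N : ℤ)) ^ m₂ * (h ^ r₂ % (N : ℤ)) ^ N % (N : ℤ) ^ 2) :
    ((c₁ * c₂ % (N : ℤ) ^ 2) ^ (2 * α) % (N : ℤ) ^ 2 - 1) / (N : ℤ) % (N : ℤ)
        * (u : ℤ) % (N : ℤ) = (((m₁ + m₂) % N : ℕ) : ℤ) := by
  have hP2 := hP.two_le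
  have hQ2 := hQ.two_le
  have hN4 : 4 ≤ N := by rw [hN]; nlinarith
  have hn1 : (1 : ℤ) < (N : ℤ) := by exact_mod_cast (by omega : 1 < N)
  have hn0 : (0 : ℤ) < (N : ℤ) := by linarith
  have hn2 : (0 : ℤ) < (N : ℤ) ^ 2 := by positivity
  haveI : NeZero N := ⟨by omega⟩
  -- totient
  have hcoPQ : Nat.Coprime P Q := (Nat.coprime_primes hP hQ).mpr hPQ
  have htot : Nat.totient N = (P - 1) * (Q - 1) := by
    rw [hN, Nat.totient_mul hcoPQ, Nat.totient_prime hP, Nat.totient_prime hQ]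
  -- y is a unit mod N
  have hyu : IsUnit ((y : ZMod N)) := by
    obtain ⟨a, b, hab⟩ := hy
    have h1 : ((a : ZMod N)) * (y : ZMod N) = 1 := by
      have := congrArg (fun z : ℤ => (z : ZMod N)) hab
      push_cast at this
      simpa [ZMod.natCast_self] using this
    exact IsUnit.of_mul_eq_one _ (by rw [mul_comm]; exact h1)
  have hyphi : ((y : ZMod N)) ^ Nat.totient N = 1 := by
    rw [← hyu.unit_spec, ← Units.val_pow_eq_pow_val, ZMod.pow_totient, Units.val_one]
  -- h ^ (2α) ≡ 1 mod N
  have hh2a : h ^ (2 * α) ≡ 1 [ZMOD (N : ℤ)] := by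
    rw [← ZMod.intCast_eq_intCast_iff]
    have hhz : ((h : ZMod N)) = -((y : ZMod N)) ^ (2 * β) := by
      have := (ZMod.intCast_eq_intCast_iff _ _ _).mpr hh
      push_cast at this
      exact this
    push_cast
    rw [hhz, Even.neg_pow (even_two_mul α), ← pow_mul]
    have hexp : 2 * β * (2 * α) = Nat.totient N := by
      rw [htot, ← hαβ]; ring
    rw [hexp, hyphi]
  -- abbreviations
  set n : ℤ := (N : ℤ) with hndef
  set s₁ : ℤ := h ^ r₁ % n with hs₁def
  set s₂ : ℤ := h ^ r₂ % n with hs₂def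
  have hs₁ : s₁ ≡ h ^ r₁ [ZMOD n] := Int.emod_emod_of_dvd _ dvd_rfl
  have hs₂ : s₂ ≡ h ^ r₂ [ZMOD n] := Int.emod_emod_of_dvd _ dvd_rfl
  -- T = (s₁ s₂)^(2α) ≡ 1 mod n
  set T : ℤ := (s₁ * s₂) ^ (2 * α) with hTdef
  have hT : T ≡ 1 [ZMOD n] := by
    calc T ≡ (h ^ r₁ * h ^ r₂) ^ (2 * α) [ZMOD n] := (hs₁.mul hs₂).pow _
      _ = (h ^ (2 * α)) ^ (r₁ + r₂) := by
          rw [← pow_add, ← pow_mul, ← pow_mul, Nat.mul_comm]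
      _ ≡ 1 ^ (r₁ + r₂) [ZMOD n] := hh2a.pow _
      _ = 1 := one_pow _
  -- T^N ≡ 1 mod n²
  have hTN : T ^ N ≡ 1 [ZMOD n ^ 2] := by
    obtain ⟨k, hk⟩ := (hT.symm).dvd
    have hTk : T = 1 + n * k := by linarith [hk]
    have h1 : T ^ N ≡ 1 + (N : ℤ) * (n * k) [ZMOD n ^ 2] := by
      have := paillier_pow_one_add (n * k) N
      rw [← hTk] at this
      exact this.of_dvd (by exact ⟨k ^ 2, by ring⟩)
    refine h1.trans ?_
    exact Int.modEq_iff_dvd.mpr ⟨-k, by push_cast; ring⟩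
  -- main congruence
  set K : ℕ := (m₁ + m₂) * (2 * α) with hKdef
  have hmain : (c₁ * c₂ % n ^ 2) ^ (2 * α) ≡ 1 + (K : ℤ) * n [ZMOD n ^ 2] := by
    have h1 : c₁ * c₂ % n ^ 2
        ≡ ((1 + n) ^ m₁ * s₁ ^ N) * ((1 + n) ^ m₂ * s₂ ^ N) [ZMOD n ^ 2] := by
      have e1 : c₁ ≡ (1 + n) ^ m₁ * s₁ ^ N [ZMOD n ^ 2] := by
        rw [hc₁]; exact Int.emod_emod_of_dvd _ dvd_rfl
      have e2 : c₂ ≡ (1 + n) ^ m₂ * s₂ ^ N [ZMOD n ^ 2] := by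
        rw [hc₂]; exact Int.emod_emod_of_dvd _ dvd_rfl
      calc c₁ * c₂ % n ^ 2 ≡ c₁ * c₂ [ZMOD n ^ 2] := Int.emod_emod_of_dvd _ dvd_rfl
        _ ≡ _ [ZMOD n ^ 2] := e1.mul e2
    have h2 : (((1 + n) ^ m₁ * s₁ ^ N) * ((1 + n) ^ m₂ * s₂ ^ N)) ^ (2 * α)
        = (1 + n) ^ K * T ^ N := by
      rw [hTdef, hKdef]; ring
    calc (c₁ * c₂ % n ^ 2) ^ (2 * α)
        ≡ (((1 + n) ^ m₁ * s₁ ^ N) * ((1 + n) ^ m₂ * s₂ ^ N)) ^ (2 * α) [ZMOD n ^ 2] :=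
          h1.pow _
      _ = (1 + n) ^ K * T ^ N := h2
      _ ≡ (1 + (K : ℤ) * n) * 1 [ZMOD n ^ 2] := (paillier_pow_one_add n K).mul hTN
      _ = 1 + (K : ℤ) * n := by ring
  set K' : ℤ := (K : ℤ) % n with hK'def
  have hK'0 : 0 ≤ K' := Int.emod_nonneg _ (by linarith)
  have hK'n : K' < n := Int.emod_lt_of_pos _ hn0
  have hmain2 : (c₁ * c₂ % n ^ 2) ^ (2 * α) ≡ 1 + K' * n [ZMOD n ^ 2] := by
    refine hmain.trans (Int.modEq_iff_dvd.mpr ?_)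
    exact ⟨-((K : ℤ) / n), by rw [hK'def, Int.emod_def]; ring⟩
  have hX : (c₁ * c₂ % n ^ 2) ^ (2 * α) % n ^ 2 = 1 + K' * n := by
    have h1 : (c₁ * c₂ % n ^ 2) ^ (2 * α) % n ^ 2 = (1 + K' * n) % n ^ 2 := hmain2
    rw [h1]
    have hb1 : (0 : ℤ) ≤ 1 + K' * n := by
      have := mul_nonneg hK'0 (le_of_lt hn0); linarith
    have hb2 : 1 + K' * n < n ^ 2 := by
      have h2' : K' * n ≤ (n - 1) * n :=
        mul_le_mul_of_nonneg_right (by linarith) (by linarith)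
      have h3' : (n - 1) * n = n ^ 2 - n := by ring
      linarith
    exact Int.emod_eq_of_lt hb1 hb2

  have hdiv : ((c₁ * c₂ % n ^ 2) ^ (2 * α) % n ^ 2 - 1) / n = K' := by
    rw [hX]
    have : (1 : ℤ) + K' * n - 1 = K' * n := by ring
    rw [this]
    exact Int.mul_ediv_cancel _ (by linarith)
  rw [hdiv]
  have hK'' : K' % n = K' := Int.emod_eq_of_lt hK'0 hK'n
  rw [hK'']
  -- final step
  have hinv : ((2 * α * u : ℕ) : ℤ) ≡ 1 [ZMOD n] := by
    show ((2 * α * u : ℕ) : ℤ) % n = 1 % n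
    rw [Int.emod_eq_of_lt (by norm_num) hn1, hndef, ← Int.natCast_mod, huinv,
      Nat.cast_one]
  have hfin : K' * u ≡ ((m₁ + m₂ : ℕ) : ℤ) [ZMOD n] := by
    have hK'K : K' ≡ (K : ℤ) [ZMOD n] := Int.emod_emod_of_dvd _ dvd_rfl
    calc K' * u ≡ (K : ℤ) * u [ZMOD n] := hK'K.mul_right _
      _ = ((m₁ + m₂ : ℕ) : ℤ) * ((2 * α * u : ℕ) : ℤ) := by
          rw [hKdef, ← Nat.cast_mul, ← Nat.cast_mul]
          congr 1
          ring
      _ ≡ ((m₁ + m₂ : ℕ) : ℤ) * 1 [ZMOD n] := hinv.mul_left _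
      _ = ((m₁ + m₂ : ℕ) : ℤ) := mul_one _
  have : K' * u % n = ((m₁ + m₂ : ℕ) : ℤ) % n := hfin
  rw [this, hndef, ← Int.natCast_mod]
end

section
/- Scalar-multiplication homomorphism of the Paillier cryptosystem: under the setup of the decryption-correctness theorem, if c = (1+N)^m · (h^r mod N)^N mod N² is a ciphertext of m < N and u < N is a natural number, then applying the decryption procedure (raising to 2α, applying the function x ↦ (x−1)/N modulo N, and multiplying by (2α)^(−1) mod N) to c^u mod N² yields (u·m) mod N. -/
private lemma paillier_pow_one_add_mul (n t : ℤ) (k : ℕ) :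
    (1 + n * t) ^ k ≡ 1 + n * t * k [ZMOD n ^ 2] := by
  induction k with
  | zero => simp
  | succ k ih =>
    have h2 : (1 + n * t * k) * (1 + n * t) ≡ 1 + n * t * ((k : ℤ) + 1) [ZMOD n ^ 2] := by
      refine Int.ModEq.symm (Int.modEq_iff_dvd.mpr ⟨t * t * k, by ring⟩)
    calc (1 + n * t) ^ (k + 1) = (1 + n * t) ^ k * (1 + n * t) := by ring
      _ ≡ (1 + n * t * k) * (1 + n * t) [ZMOD n ^ 2] := ih.mul_right _
      _ ≡ 1 + n * t * ((k : ℤ) + 1) [ZMOD n ^ 2] := h2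
      _ = 1 + n * t * ((k + 1 : ℕ) : ℤ) := by push_cast; ring

private lemma paillier_euler_int {N : ℕ} [NeZero N] {y : ℤ} (hy : IsCoprime y (N : ℤ)) :
    y ^ N.totient ≡ 1 [ZMOD (N : ℤ)] := by
  have h1 : IsUnit ((y : ZMod N)) := by
    have h2 := hy.map (Int.castRingHom (ZMod N))
    simp only [Int.coe_castRingHom, Int.cast_natCast, ZMod.natCast_self] at h2
    exact isCoprime_zero_right.mp h2
  have h3 := ZMod.pow_totient h1.unit
  have h4 : ((y : ZMod N)) ^ N.totient = 1 := by
    rw [← h1.unit_spec, ← Units.val_pow_eq_pow_val, h3, Units.val_one]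
  have h5 : ((y ^ N.totient : ℤ) : ZMod N) = ((1 : ℤ) : ZMod N) := by push_cast; simpa using h4
  exact (ZMod.intCast_eq_intCast_iff _ _ _).mp h5

/-- Scalar-multiplication homomorphism of the Paillier cryptosystem:
decrypting `c^s mod N²` (for a scalar `s < N`) yields `(s·m) mod N`. -/
theorem paillier_scalar_homomorphism (P Q : ℕ) (hP : P.Prime) (hQ : Q.Prime)
    (hPodd : Odd P) (hQodd : Odd Q) (hPQ : P ≠ Q)
    (N : ℕ) (hN : N = P * Q)
    (α β : ℕ) (hα : 0 < α) (hβ : 0 < β)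
    (hαβ : 4 * α * β = (P - 1) * (Q - 1))
    (hco : Nat.gcd (2 * α) N = 1)
    (y : ℤ) (hy : IsCoprime y (N : ℤ))
    (h : ℤ) (hh : h ≡ -y ^ (2 * β) [ZMOD (N : ℤ)])
    (m r : ℕ) (hm : m < N)
    (u : ℕ) (hu : u < N) (huinv : 2 * α * u % N = 1)
    (s : ℕ) (hs : s < N)
    (c : ℤ) (hc : c = (1 + (N : ℤ)) ^ m * (h ^ r % (N : ℤ)) ^ N % (N : ℤ) ^ 2) :
    ((c ^ s % (N : ℤ) ^ 2) ^ (2 * α) % (N : ℤ) ^ 2 - 1) / (N : ℤ) % (N : ℤ)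
        * (u : ℤ) % (N : ℤ) = ((s * m % N : ℕ) : ℤ) := by
  have hN1 : 1 < N := by
    have h1 := hP.two_le; have h2 := hQ.two_le
    have : 2 * 2 ≤ P * Q := Nat.mul_le_mul h1 h2
    omega
  haveI : NeZero N := ⟨by omega⟩
  have hn0 : (N : ℤ) ≠ 0 := by exact_mod_cast (by omega : N ≠ 0)
  set n : ℤ := (N : ℤ) with hn
  -- totient of N
  have htot : N.totient = (P - 1) * (Q - 1) := by
    rw [hN, Nat.totient_mul ((Nat.coprime_primes hP hQ).mpr hPQ),
      Nat.totient_prime hP, Nat.totient_prime hQ]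
  have hEuler : y ^ ((P - 1) * (Q - 1)) ≡ 1 [ZMOD n] := htot ▸ paillier_euler_int hy
  -- h^(2α) ≡ 1 mod N
  have hh2 : h ^ (2 * α) ≡ 1 [ZMOD n] := by
    calc h ^ (2 * α) ≡ (-y ^ (2 * β)) ^ (2 * α) [ZMOD n] := hh.pow _
      _ = (y ^ (2 * β)) ^ (2 * α) := Even.neg_pow ⟨α, by ring⟩ _
      _ = y ^ ((P - 1) * (Q - 1)) := by rw [← pow_mul, ← hαβ]; ring_nf
      _ ≡ 1 [ZMOD n] := hEuler
  set w : ℤ := h ^ r % n with hwdef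
  have hw : w ^ (2 * α) ≡ 1 [ZMOD n] := by
    calc w ^ (2 * α) ≡ (h ^ r) ^ (2 * α) [ZMOD n] :=
          Int.ModEq.pow _ (Int.emod_emod_of_dvd _ dvd_rfl)
      _ = (h ^ (2 * α)) ^ r := by rw [← pow_mul, ← pow_mul, mul_comm]
      _ ≡ 1 ^ r [ZMOD n] := hh2.pow r
      _ = 1 := one_pow r
  obtain ⟨t, ht⟩ := Int.modEq_iff_dvd.mp hw
  have hwt : w ^ (2 * α) = 1 + n * (-t) := by linarith
  -- the key congruence
  set K : ℤ := (m : ℤ) * s * (2 * α) with hK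
  have hcmod : c ≡ (1 + n) ^ m * w ^ N [ZMOD n ^ 2] := by
    rw [hc]; exact Int.emod_emod_of_dvd _ dvd_rfl
  have hkey : c ^ (s * (2 * α)) ≡ 1 + n * K [ZMOD n ^ 2] := by
    calc c ^ (s * (2 * α)) ≡ ((1 + n) ^ m * w ^ N) ^ (s * (2 * α)) [ZMOD n ^ 2] :=
          hcmod.pow _
      _ = (1 + n * 1) ^ (m * (s * (2 * α))) * (w ^ (2 * α)) ^ (N * s) := by
          rw [mul_pow, ← pow_mul, ← pow_mul, ← pow_mul]; ring_nf
      _ = (1 + n * 1) ^ (m * (s * (2 * α))) * (1 + n * (-t)) ^ (N * s) := by rw [hwt]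
      _ ≡ (1 + n * 1 * (m * (s * (2 * α)) : ℕ)) * (1 + n * (-t) * ((N * s : ℕ) : ℤ))
           [ZMOD n ^ 2] :=
          (paillier_pow_one_add_mul n 1 _).mul (paillier_pow_one_add_mul n (-t) _)
      _ ≡ 1 + n * K [ZMOD n ^ 2] := by
          refine Int.ModEq.symm (Int.modEq_iff_dvd.mpr
            ⟨-(t * (s : ℤ)) - n * ((m : ℤ) * s * (2 * α)) * t * s, ?_⟩)
          push_cast [hK]; ring
  -- decode the expression
  set A : ℤ := (c ^ s % n ^ 2) ^ (2 * α) % n ^ 2 with hA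
  have hAmod : A ≡ 1 + n * K [ZMOD n ^ 2] := by
    calc A ≡ (c ^ s % n ^ 2) ^ (2 * α) [ZMOD n ^ 2] := Int.emod_emod_of_dvd _ dvd_rfl
      _ ≡ (c ^ s) ^ (2 * α) [ZMOD n ^ 2] :=
          Int.ModEq.pow _ (Int.emod_emod_of_dvd _ dvd_rfl)
      _ = c ^ (s * (2 * α)) := by rw [← pow_mul]
      _ ≡ 1 + n * K [ZMOD n ^ 2] := hkey
  obtain ⟨e, he⟩ := Int.modEq_iff_dvd.mp hAmod
  have hA1 : A - 1 = n * (K + n * (-e)) := by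
    have : (1 + n * K) - A = n ^ 2 * e := he
    ring_nf
    ring_nf at this
    linarith
  have hdiv : (A - 1) / n = K + n * (-e) := by
    rw [hA1, Int.mul_ediv_cancel_left _ hn0]
  rw [hdiv]
  have hmodn : (K + n * (-e)) % n = K % n := by
    simp [Int.add_mul_emod_self_left]
  rw [hmodn]
  -- finish with modular arithmetic over ℕ
  have : K % n * (u : ℤ) % n = (K * u) % n := by
    conv_rhs => rw [Int.mul_emod]
    rw [Int.mul_emod (K % n) u, Int.emod_emod_of_dvd _ dvd_rfl]
  rw [this]
  have hnat : (m * s * (2 * α) * u) % N = s * m % N := by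
    have h1 : m * s * (2 * α) * u = (m * s) * (2 * α * u) := by ring
    rw [h1, Nat.mul_mod, huinv, mul_one, Nat.mod_mod_of_dvd _ dvd_rfl, mul_comm]
  calc K * u % n = ((m * s * (2 * α) * u : ℕ) : ℤ) % ((N : ℕ) : ℤ) := by
        push_cast [hK]; ring_nf; rfl
    _ = ((m * s * (2 * α) * u % N : ℕ) : ℤ) := (Int.natCast_mod _ _).symm
    _ = ((s * m % N : ℕ) : ℤ) := by rw [hnat]
end

section
/- End-to-end plaintext correctness of BatchSMUL: let L, s be natural numbers, δ an integer, and for 1 ≤ i ≤ s let xᵢ, yᵢ be integers and r_{i,1}, r_{i,2} natural numbers such that 0 ≤ xᵢ + δ, 0 ≤ yᵢ + δ, xᵢ + δ + r_{i,1} < L, and yᵢ + δ + r_{i,2} < L. Define C = Σ_{i=1}^{s} ( L^(2i−1)·(xᵢ + r_{i,1} + δ) + L^(2i−2)·(yᵢ + r_{i,2} + δ) ). Then for every i, setting cᵢ = ⌊(C mod L^(2i)) / L^(2(i−1))⌋, aᵢ = ⌊cᵢ/L⌋ − δ and bᵢ = (cᵢ mod L) − δ, one has aᵢ = xᵢ +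 r_{i,1}, bᵢ = yᵢ + r_{i,2}, and aᵢ·bᵢ − r_{i,2}·(xᵢ + δ) − r_{i,1}·(yᵢ + δ) − r_{i,1}·r_{i,2} + δ·(r_{i,1} + r_{i,2}) = xᵢ·yᵢ. -/
/-!
Since `0 ≤ xᵢ + δ` and `xᵢ + δ + r_{i,1} < L`, the blinded values `xᵢ + r_{i,1} + δ` and
`yᵢ + r_{i,2} + δ` are base-`L` digits, so `cᵢ := (yᵢ + r_{i,2} + δ) + L (xᵢ + r_{i,1} + δ)` is a
base-`L²` digit and `C = ∑ (L²)^(i-1) cᵢ`. Reducing modulo `(L²)^i` keeps the first `i` digits,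
dividing by `(L²)^(i-1)` then isolates `cᵢ`, and `cᵢ / L`, `cᵢ % L` are its two base-`L` digits.
The last claim is a ring identity.
-/

open Finset

section Digits

variable {B : ℤ} {c : ℕ → ℤ}

theorem sum_range_pow_mul_nonneg_and_lt {n : ℕ} (hc : ∀ k < n, 0 ≤ c k ∧ c k < B) :
    0 ≤ ∑ k ∈ range n, B ^ k * c k ∧ ∑ k ∈ range n, B ^ k * c k < B ^ n := by
  induction n with
  | zero => simp
  | succ n ih =>
    obtain ⟨hS0, hSlt⟩ := ih fun k hk => hc k (by omega)
    obtain ⟨hc0, hclt⟩ := hc n (by omega)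
    have hBn : 0 ≤ B ^ n := pow_nonneg (hc0.trans hclt.le) n
    have hdigit : B ^ n * c n ≤ B ^ n * (B - 1) := mul_le_mul_of_nonneg_left (by omega) hBn
    rw [sum_range_succ, pow_succ]
    constructor <;> nlinarith [mul_nonneg hBn hc0]

theorem sum_range_pow_mul_emod_pow {m n : ℕ} (hmn : m ≤ n) (hc : ∀ k < m, 0 ≤ c k ∧ c k < B) :
    (∑ k ∈ range n, B ^ k * c k) % B ^ m = ∑ k ∈ range m, B ^ k * c k := by
  obtain ⟨l, rfl⟩ := Nat.exists_eq_add_of_le hmn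
  have htail : ∑ k ∈ range l, B ^ (m + k) * c (m + k)
      = B ^ m * ∑ k ∈ range l, B ^ k * c (m + k) := by
    simp only [pow_add, mul_sum, mul_assoc]
  obtain ⟨hS0, hSlt⟩ := sum_range_pow_mul_nonneg_and_lt hc
  rw [sum_range_add, htail, Int.add_mul_emod_self_left, Int.emod_eq_of_lt hS0 hSlt]

theorem sum_range_succ_pow_mul_ediv_pow {j : ℕ} (hc : ∀ k ≤ j, 0 ≤ c k ∧ c k < B) :
    (∑ k ∈ range (j + 1), B ^ k * c k) / B ^ j = c j := by
  obtain ⟨hc0, hclt⟩ := hc j le_rfl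
  have hBj : B ^ j ≠ 0 := pow_ne_zero j (by omega)
  obtain ⟨hS0, hSlt⟩ := sum_range_pow_mul_nonneg_and_lt (n := j) fun k hk => hc k hk.le
  rw [sum_range_succ, Int.add_mul_ediv_left _ _ hBj, Int.ediv_eq_zero_of_lt hS0 hSlt, zero_add]

theorem sum_range_pow_mul_emod_pow_succ_ediv_pow {j n : ℕ} (hjn : j < n)
    (hc : ∀ k ≤ j, 0 ≤ c k ∧ c k < B) :
    (∑ k ∈ range n, B ^ k * c k) % B ^ (j + 1) / B ^ j = c j := by
  rw [sum_range_pow_mul_emod_pow hjn fun k hk => hc k (by omega),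
    sum_range_succ_pow_mul_ediv_pow hc]

theorem add_mul_nonneg_and_lt_sq {L d e : ℤ} (hd : 0 ≤ d ∧ d < L) (he : 0 ≤ e ∧ e < L) :
    0 ≤ e + L * d ∧ e + L * d < L ^ 2 := by
  constructor <;> nlinarith

theorem add_mul_ediv_of_digit {L d e : ℤ} (he : 0 ≤ e ∧ e < L) : (e + L * d) / L = d := by
  rw [Int.add_mul_ediv_left _ _ (by omega), Int.ediv_eq_zero_of_lt he.1 he.2, zero_add]

theorem add_mul_emod_of_digit {L d e : ℤ} (he : 0 ≤ e ∧ e < L) : (e + L * d) % L = e := by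
  rw [Int.add_mul_emod_self_left, Int.emod_eq_of_lt he.1 he.2]

end Digits

theorem sum_Icc_interleaved_eq_sum_range_sq_pow (L s : ℕ) (a b : ℕ → ℤ) :
    ∑ i ∈ Icc 1 s, ((L : ℤ) ^ (2 * i - 1) * a i + (L : ℤ) ^ (2 * i - 2) * b i)
      = ∑ k ∈ range s, ((L : ℤ) ^ 2) ^ k * (b (k + 1) + L * a (k + 1)) := by
  rw [← Ico_add_one_right_eq_Icc, sum_Ico_eq_sum_range, Nat.add_sub_cancel]
  refine sum_congr rfl fun k _ => ?_
  rw [show 2 * (1 + k) - 1 = 2 * k + 1 by omega, show 2 * (1 + k) - 2 = 2 * k by omega,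
    add_comm 1 k]
  ring

/-- End-to-end plaintext correctness of the BatchSMUL protocol. -/
theorem batchSMUL_correct (L s : ℕ) (δ : ℤ) (x y : ℕ → ℤ) (r₁ r₂ : ℕ → ℕ)
    (hx0 : ∀ i ∈ Finset.Icc 1 s, 0 ≤ x i + δ)
    (hy0 : ∀ i ∈ Finset.Icc 1 s, 0 ≤ y i + δ)
    (hxL : ∀ i ∈ Finset.Icc 1 s, x i + δ + (r₁ i : ℤ) < (L : ℤ))
    (hyL : ∀ i ∈ Finset.Icc 1 s, y i + δ + (r₂ i : ℤ) < (L : ℤ))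
    (C : ℤ)
    (hC : C = ∑ i ∈ Finset.Icc 1 s,
      ((L : ℤ) ^ (2 * i - 1) * (x i + (r₁ i : ℤ) + δ) +
        (L : ℤ) ^ (2 * i - 2) * (y i + (r₂ i : ℤ) + δ))) :
    ∀ i ∈ Finset.Icc 1 s,
      (C % (L : ℤ) ^ (2 * i)) / (L : ℤ) ^ (2 * (i - 1)) / (L : ℤ) - δ
          = x i + (r₁ i : ℤ) ∧
      (C % (L : ℤ) ^ (2 * i)) / (L : ℤ) ^ (2 * (i - 1)) % (L : ℤ) - δ
          = y i + (r₂ i : ℤ) ∧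
      (x i + (r₁ i : ℤ)) * (y i + (r₂ i : ℤ))
          - (r₂ i : ℤ) * (x i + δ) - (r₁ i : ℤ) * (y i + δ)
          - (r₁ i : ℤ) * (r₂ i : ℤ) + δ * ((r₁ i : ℤ) + (r₂ i : ℤ))
        = x i * y i := by
  have hxdigit : ∀ i ∈ Icc 1 s, 0 ≤ x i + r₁ i + δ ∧ x i + r₁ i + δ < L := fun i hi =>
    ⟨by linarith [hx0 i hi, (r₁ i).cast_nonneg (α := ℤ)], by linarith [hxL i hi]⟩
  have hydigit : ∀ i ∈ Icc 1 s, 0 ≤ y i + r₂ i + δ ∧ y i + r₂ i + δ < L := fun i hi =>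
    ⟨by linarith [hy0 i hi, (r₂ i).cast_nonneg (α := ℤ)], by linarith [hyL i hi]⟩
  intro i hi
  obtain ⟨k, rfl⟩ : ∃ k, i = k + 1 := ⟨i - 1, by grind⟩
  have hdigit : (C % (L : ℤ) ^ (2 * (k + 1))) / (L : ℤ) ^ (2 * (k + 1 - 1))
      = (y (k + 1) + r₂ (k + 1) + δ) + L * (x (k + 1) + r₁ (k + 1) + δ) := by
    rw [hC, sum_Icc_interleaved_eq_sum_range_sq_pow, Nat.add_sub_cancel, pow_mul, pow_mul]
    refine sum_range_pow_mul_emod_pow_succ_ediv_pow (by grind) fun m hm => ?_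
    have hm' : m + 1 ∈ Icc 1 s := by grind
    exact add_mul_nonneg_and_lt_sq (hxdigit _ hm') (hydigit _ hm')
  rw [hdigit, add_mul_ediv_of_digit (hydigit _ hi), add_mul_emod_of_digit (hydigit _ hi)]
  exact ⟨by ring, by ring, by ring⟩
end

section
/- Correctness of the 2-SMIN comparison in the case π = 0: let ℓ, σ be natural numbers and N a natural number with N > 2^(σ+ℓ+3). Let x, y be integers with |x| ≤ 2^ℓ and |y| ≤ 2^ℓ, let r₁ be an integer with 1 ≤ r₁ < 2^σ, and let r₂ be an integer with 0 < r₂, 2·r₂ ≤ N, and 2·(r₁ + r₂) > N. Then the residue D = (r₁·(x − y + 1) + r₂) mod N satisfies 2·D > N if and only if x ≥ y. -/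
/-!
Write `t = x - y + 1`, so that `x ≥ y ↔ 0 < t`. Since `2 r₂ ≤ N < 2 (r₁ + r₂)`, the value
`r₁ t + r₂` exceeds `N / 2` exactly when `t ≥ 1`. The bound `N > 2^(σ+ℓ+3)` makes `r₁ |t|` small
enough that `r₁ t + r₂` stays in `[0, N)`, so reducing modulo `N` does not change it.
-/

section Masking

variable {N r₁ r₂ : ℤ} (hr₁ : 0 < r₁) (hr₂ : 2 * r₂ ≤ N) (hsum : N < 2 * (r₁ + r₂))
include hr₁ hr₂ hsum

theorem lt_two_mul_mul_add_iff_pos (t : ℤ) : N < 2 * (r₁ * t + r₂) ↔ 0 < t := by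
  constructor
  · intro h
    by_contra! ht
    nlinarith [mul_nonpos_of_nonneg_of_nonpos hr₁.le ht]
  · intro ht
    nlinarith [le_mul_of_one_le_right hr₁.le ht]

theorem mul_add_emod_eq_self {t : ℤ} (ht : 2 * r₁ * (|t| + 1) ≤ N) :
    (r₁ * t + r₂) % N = r₁ * t + r₂ := by
  have hlo : -(r₁ * |t|) ≤ r₁ * t := by
    rw [← mul_neg]; exact mul_le_mul_of_nonneg_left (neg_abs_le t) hr₁.le
  have hhi : r₁ * t ≤ r₁ * |t| := mul_le_mul_of_nonneg_left (le_abs_self t) hr₁.le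
  exact Int.emod_eq_of_lt (by linarith) (by linarith)

end Masking

theorem twoSMIN_compare_pi0_general (ℓ σ N : ℕ) (hN : 2 ^ (σ + ℓ + 3) < N)
    (x y : ℤ) (hx : |x| ≤ 2 ^ ℓ) (hy : |y| ≤ 2 ^ ℓ)
    (r₁ : ℤ) (hr₁ : 1 ≤ r₁) (hr₁' : r₁ < 2 ^ σ)
    (r₂ : ℤ) (hr₂' : 2 * r₂ ≤ (N : ℤ))
    (hsum : (N : ℤ) < 2 * (r₁ + r₂)) :
    2 * ((r₁ * (x - y + 1) + r₂) % (N : ℤ)) > (N : ℤ) ↔ x ≥ y := by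
  have hr₁_pos : 0 < r₁ := hr₁
  have hpow : (1 : ℤ) ≤ 2 ^ ℓ := one_le_pow₀ one_le_two
  have ht : |x - y + 1| + 1 ≤ 4 * 2 ^ ℓ := by
    obtain ⟨hx₁, hx₂⟩ := abs_le.mp hx
    obtain ⟨hy₁, hy₂⟩ := abs_le.mp hy
    have : |x - y + 1| ≤ 2 * 2 ^ ℓ + 1 := abs_le.mpr ⟨by linarith, by linarith⟩
    linarith
  have hsmall : 2 * r₁ * (|x - y + 1| + 1) ≤ N := by
    calc 2 * r₁ * (|x - y + 1| + 1) ≤ 2 * 2 ^ σ * (4 * 2 ^ ℓ) := by gcongr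
      _ = 2 ^ (σ + ℓ + 3) := by ring
      _ ≤ N := by exact_mod_cast hN.le
  rw [gt_iff_lt, mul_add_emod_eq_self hr₁_pos hr₂' hsum hsmall,
    lt_two_mul_mul_add_iff_pos hr₁_pos hr₂' hsum]
  omega

/-- Correctness of the 2-SMIN comparison in the case `π = 0`:
`D = (r₁·(x − y + 1) + r₂) mod N` satisfies `2·D > N` iff `x ≥ y`. -/
theorem twoSMIN_compare_pi0 (ℓ σ N : ℕ) (hN : 2 ^ (σ + ℓ + 3) < N)
    (x y : ℤ) (hx : |x| ≤ 2 ^ ℓ) (hy : |y| ≤ 2 ^ ℓ)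
    (r₁ : ℤ) (hr₁ : 1 ≤ r₁) (hr₁' : r₁ < 2 ^ σ)
    (r₂ : ℤ) (hr₂ : 0 < r₂) (hr₂' : 2 * r₂ ≤ (N : ℤ))
    (hsum : (N : ℤ) < 2 * (r₁ + r₂)) :
    2 * ((r₁ * (x - y + 1) + r₂) % (N : ℤ)) > (N : ℤ) ↔ x ≥ y :=
  twoSMIN_compare_pi0_general ℓ σ N hN x y hx hy r₁ hr₁ hr₁' r₂ hr₂' hsum
end

section
/- Correctness of the 2-SMIN comparison in the case π = 1: let ℓ, σ be natural numbers and N a natural number with N > 2^(σ+ℓ+3). Let x, y be integers with |x| ≤ 2^ℓ and |y| ≤ 2^ℓ, let r₁ be an integer with 1 ≤ r₁ < 2^σ, and let r₂ be an integer with 0 < r₂, 2·r₂ ≤ N, and 2·(r₁ + r₂) > N. Then the residue D = (r₁·(y − x) + r₂) mod N satisfies 2·D > N if and only if y > x. -/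
/-!
Since `2 r₂ ≤ N < 2 (r₁ + r₂)`, the mask `r₂` lies within `r₁` of `N / 2`, while the masked
difference satisfies `|r₁ (y - x)| < 2^(σ + ℓ + 1)`, far below `N / 2`. Hence
`D = r₁ (y - x) + r₂` already lies in `[0, N)`, so the reduction mod `N` does nothing, and
`2 D` exceeds `N` exactly when `r₁ (y - x) ≥ r₁`, i.e. when `y - x ≥ 1`.
-/

lemma abs_mul_sub_le {a x y B : ℤ} (hx : |x| ≤ B) (hy : |y| ≤ B) :
    |a * (y - x)| ≤ |a| * (2 * B) := by
  rw [abs_mul]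
  gcongr
  linarith [abs_sub y x]

section Masking

variable {r₁ r₂ N : ℤ}

lemma add_mem_Ico_of_two_mul_abs_add_lt {m : ℤ} (hm : 2 * (|m| + r₁) < N)
    (hr₂ : 2 * r₂ ≤ N) (hsum : N < 2 * (r₁ + r₂)) : 0 ≤ m + r₂ ∧ m + r₂ < N := by
  constructor <;> linarith [neg_abs_le m, le_abs_self m]

lemma lt_two_mul_mul_add_iff {d : ℤ} (hr₂ : 2 * r₂ ≤ N) (hsum : N < 2 * (r₁ + r₂)) :
    N < 2 * (r₁ * d + r₂) ↔ 0 < d := by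
  have hr₁ : 0 < r₁ := by linarith
  constructor
  · contrapose!
    intro hd
    linarith [mul_nonpos_of_nonneg_of_nonpos hr₁.le hd]
  · intro hd
    linarith [le_mul_of_one_le_right hr₁.le (by omega : 1 ≤ d)]

end Masking

theorem twoSMIN_compare_pi1_general (ℓ σ N : ℕ) (hN : 2 ^ (σ + ℓ + 3) < N)
    (x y : ℤ) (hx : |x| ≤ 2 ^ ℓ) (hy : |y| ≤ 2 ^ ℓ)
    (r₁ : ℤ) (hr₁' : r₁ < 2 ^ σ)
    (r₂ : ℤ) (hr₂' : 2 * r₂ ≤ (N : ℤ))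
    (hsum : (N : ℤ) < 2 * (r₁ + r₂)) :
    2 * ((r₁ * (y - x) + r₂) % (N : ℤ)) > (N : ℤ) ↔ y > x := by
  have hr₁ : 0 < r₁ := by linarith
  have hm : 2 * (|r₁ * (y - x)| + r₁) < N := by
    have hN' : (2 : ℤ) ^ (σ + ℓ + 3) < N := by exact_mod_cast hN
    have hmask := abs_mul_sub_le (a := r₁) hx hy
    rw [abs_of_pos hr₁] at hmask
    have hℓ : (1 : ℤ) ≤ 2 ^ ℓ := one_le_pow₀ one_le_two
    calc 2 * (|r₁ * (y - x)| + r₁) ≤ r₁ * (2 ^ ℓ * 8) := by nlinarith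
      _ < 2 ^ σ * (2 ^ ℓ * 8) := by gcongr
      _ = 2 ^ (σ + ℓ + 3) := by ring
      _ < N := hN'
  obtain ⟨h₀, h_lt⟩ := add_mem_Ico_of_two_mul_abs_add_lt hm hr₂' hsum
  rw [Int.emod_eq_of_lt h₀ h_lt, gt_iff_lt, lt_two_mul_mul_add_iff hr₂' hsum, sub_pos]

/-- Correctness of the 2-SMIN comparison in the case `π = 1`:
`D = (r₁·(y − x) + r₂) mod N` satisfies `2·D > N` iff `y > x`. -/
theorem twoSMIN_compare_pi1 (ℓ σ N : ℕ) (hN : 2 ^ (σ + ℓ + 3) < N)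
    (x y : ℤ) (hx : |x| ≤ 2 ^ ℓ) (hy : |y| ≤ 2 ^ ℓ)
    (r₁ : ℤ) (hr₁ : 1 ≤ r₁) (hr₁' : r₁ < 2 ^ σ)
    (r₂ : ℤ) (hr₂ : 0 < r₂) (hr₂' : 2 * r₂ ≤ (N : ℤ))
    (hsum : (N : ℤ) < 2 * (r₁ + r₂)) :
    2 * ((r₁ * (y - x) + r₂) % (N : ℤ)) > (N : ℤ) ↔ y > x :=
  twoSMIN_compare_pi1_general ℓ σ N hN x y hx hy r₁ hr₁' r₂ hr₂' hsum
end

section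
/- End-to-end correctness of 2-SMIN: let ℓ, σ be natural numbers and N a natural number with N > 2^(σ+ℓ+3); let x, y be integers with |x| ≤ 2^ℓ and |y| ≤ 2^ℓ, let r₁ be an integer with 1 ≤ r₁ < 2^σ, and let r₂ be an integer with 0 < r₂, 2·r₂ ≤ N, and 2·(r₁ + r₂) > N. For π ∈ {0,1} define D_π = (r₁·(x − y + 1) + r₂) mod N if π = 0 and D_π = (r₁·(y − x) + r₂) mod N if π = 1; define d₀ = y if 2·D_π > N and d₀ = x otherwise; and define the output as d₀ if π = 0 and as x + y − d₀ if π = 1. Then for both values of π the output equals min(x, y). -/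
/-!
Write the blinded difference as `r₁ * t + r₂` with `t = x - y + 1` (for `π = 0`) or `t = y - x`
(for `π = 1`). Since `r₂ ≤ N / 2 < r₁ + r₂`, this quantity exceeds `N / 2` exactly when `t ≥ 1`,
and the size bound on `N` keeps it inside `[0, N)`, so reduction modulo `N` does not change it.
Hence `S₂` returns `min x y` when `π = 0` and `max x y` when `π = 1`, and `x + y - max x y = min x y`.
-/

theorem lt_two_mul_emod_iff {N r₁ r₂ t : ℤ} (hr₁ : 0 ≤ r₁) (hr₂ : 2 * r₂ ≤ N)
    (hsum : N < 2 * (r₁ + r₂)) (ht : 2 * r₁ * (|t| + 1) < N) :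
    N < 2 * ((r₁ * t + r₂) % N) ↔ 0 < t := by
  rcases lt_or_ge 0 t with hpos | hnonpos
  · have hlow : r₁ ≤ r₁ * t := le_mul_of_one_le_right hr₁ hpos
    rw [abs_of_pos hpos] at ht
    rw [Int.emod_eq_of_lt (by linarith) (by nlinarith)]
    exact ⟨fun _ => hpos, fun _ => by linarith⟩
  · have hhigh : r₁ * t ≤ 0 := mul_nonpos_of_nonneg_of_nonpos hr₁ hnonpos
    rw [abs_of_nonpos hnonpos] at ht
    rw [Int.emod_eq_of_lt (by nlinarith) (by linarith)]
    exact ⟨fun h => by linarith, fun h => by linarith⟩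

theorem two_mul_mul_abs_add_one_lt {ℓ σ N : ℕ} {r₁ t : ℤ} (hN : 2 ^ (σ + ℓ + 3) < N)
    (hr₁ : 0 ≤ r₁) (hr₁' : r₁ < 2 ^ σ) (ht : |t| ≤ 2 ^ (ℓ + 1) + 1) :
    2 * r₁ * (|t| + 1) < N := by
  have hpow : (2 : ℤ) ≤ 2 ^ (ℓ + 1) := le_self_pow₀ (by norm_num) (by omega)
  calc 2 * r₁ * (|t| + 1)
      ≤ 2 * r₁ * 2 ^ (ℓ + 2) := by gcongr; rw [pow_succ]; linarith
    _ < 2 * 2 ^ σ * 2 ^ (ℓ + 2) := by gcongr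
    _ = 2 ^ (σ + ℓ + 3) := by ring
    _ < N := by exact_mod_cast hN

theorem twoSMIN_correct_general (ℓ σ N : ℕ) (hN : 2 ^ (σ + ℓ + 3) < N)
    (x y : ℤ) (hx : |x| ≤ 2 ^ ℓ) (hy : |y| ≤ 2 ^ ℓ)
    (r₁ : ℤ) (hr₁ : 1 ≤ r₁) (hr₁' : r₁ < 2 ^ σ)
    (r₂ : ℤ) (hr₂' : 2 * r₂ ≤ (N : ℤ))
    (hsum : (N : ℤ) < 2 * (r₁ + r₂)) :
    ∀ π : Fin 2,
      (fun out => out = min x y)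
        (let D : ℤ := if π = 0 then (r₁ * (x - y + 1) + r₂) % (N : ℤ)
                      else (r₁ * (y - x) + r₂) % (N : ℤ)
         let d₀ : ℤ := if 2 * D > (N : ℤ) then y else x
         if π = 0 then d₀ else x + y - d₀) := by
  have hpow : (2 : ℤ) ^ (ℓ + 1) = 2 ^ ℓ + 2 ^ ℓ := by ring
  have hx' := abs_le.mp hx
  have hy' := abs_le.mp hy
  have key (t : ℤ) (ht : |t| ≤ 2 ^ (ℓ + 1) + 1) :
      (N : ℤ) < 2 * ((r₁ * t + r₂) % N) ↔ 0 < t :=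
    lt_two_mul_emod_iff (t := t) (by omega) hr₂' hsum
      (two_mul_mul_abs_add_one_lt hN (by omega) hr₁' ht)
  intro π
  fin_cases π
  · show (if 2 * ((r₁ * (x - y + 1) + r₂) % N) > N then y else x) = min x y
    simp only [gt_iff_lt, key (x - y + 1) (abs_le.mpr ⟨by linarith, by linarith⟩)]
    split_ifs <;> omega
  · show x + y - (if 2 * ((r₁ * (y - x) + r₂) % N) > N then y else x) = min x y
    simp only [gt_iff_lt, key (y - x) (abs_le.mpr ⟨by linarith, by linarith⟩)]
    split_ifs <;> omega

/-- End-to-end correctness of the 2-SMIN protocol: for both values of the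
random bit `π`, the output equals `min(x, y)`. -/
theorem twoSMIN_correct (ℓ σ N : ℕ) (hN : 2 ^ (σ + ℓ + 3) < N)
    (x y : ℤ) (hx : |x| ≤ 2 ^ ℓ) (hy : |y| ≤ 2 ^ ℓ)
    (r₁ : ℤ) (hr₁ : 1 ≤ r₁) (hr₁' : r₁ < 2 ^ σ)
    (r₂ : ℤ) (hr₂ : 0 < r₂) (hr₂' : 2 * r₂ ≤ (N : ℤ))
    (hsum : (N : ℤ) < 2 * (r₁ + r₂)) :
    ∀ π : Fin 2,
      (fun out => out = min x y)
        (let D : ℤ := if π = 0 then (r₁ * (x - y + 1) + r₂) % (N : ℤ)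
                      else (r₁ * (y - x) + r₂) % (N : ℤ)
         let d₀ : ℤ := if 2 * D > (N : ℤ) then y else x
         if π = 0 then d₀ else x + y - d₀) :=
  twoSMIN_correct_general ℓ σ N hN x y hx hy r₁ hr₁ hr₁' r₂ hr₂' hsum
end

section
/- Theorem 2 (the comparison value reveals nothing): let ℓ, σ be natural numbers and N a natural number with N > 2^(σ+ℓ+3); let x, y be integers with |x| ≤ 2^ℓ and |y| ≤ 2^ℓ, let r₁ be an integer with 1 ≤ r₁ < 2^σ, and let r₂ be an integer with 0 < r₂, 2·r₂ ≤ N, and 2·(r₁ + r₂) > N. Define D₀ = (r₁·(x − y + 1) + r₂) mod N and D₁ = (r₁·(y − x) + r₂) mod N. Then exactly one of the events 2·D₀ > N and 2·D₁ > N holds; consequently, if π is chosen uniformly at random from {0,1}, the probability that 2·D_π > N equals 1/2, independently of x and y. -/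
/-!
Since `r₁` is smaller than `2^σ` and `|x|, |y| ≤ 2^ℓ`, the masked differences
`r₁·t + r₂` (with `t = x − y + 1` or `t = y − x`) already lie in `[0, N)`, so the reduction
modulo `N` does nothing. Because `r₂ ≤ N/2 < r₁ + r₂`, such a value exceeds `N/2` exactly
when `t > 0`, and exactly one of `x − y + 1` and `y − x = 1 − (x − y + 1)` is positive.
-/

namespace TwoSMIN

lemma two_mul_abs_mul_add_lt_of_abs_le {ℓ σ : ℕ} {r t N : ℤ} (hr : 0 ≤ r) (hrσ : r < 2 ^ σ)
    (hN : 2 ^ (σ + ℓ + 3) ≤ N) (ht : |t| ≤ 2 * 2 ^ ℓ + 1) :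
    2 * |r * t| + 2 * r < N := by
  have hℓ : (1 : ℤ) ≤ 2 ^ ℓ := one_le_pow₀ one_le_two
  have hrt : |r * t| ≤ r * (2 * 2 ^ ℓ + 1) := by
    rw [abs_mul, abs_of_nonneg hr]
    exact mul_le_mul_of_nonneg_left ht hr
  calc 2 * |r * t| + 2 * r ≤ r * 2 ^ (ℓ + 3) := by rw [pow_add]; nlinarith
    _ < 2 ^ σ * 2 ^ (ℓ + 3) := by gcongr
    _ = 2 ^ (σ + ℓ + 3) := by ring
    _ ≤ N := hN

lemma emod_eq_self_of_two_mul_abs_add_lt {a r r₂ N : ℤ} (ha : 2 * |a| + 2 * r < N)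
    (hr₂ : 2 * r₂ ≤ N) (hsum : N < 2 * (r + r₂)) : (a + r₂) % N = a + r₂ :=
  Int.emod_eq_of_lt (by linarith [neg_abs_le a]) (by linarith [le_abs_self a])

lemma lt_two_mul_mul_add_iff {r r₂ t N : ℤ} (hr : 0 ≤ r) (hr₂ : 2 * r₂ ≤ N)
    (hsum : N < 2 * (r + r₂)) : N < 2 * (r * t + r₂) ↔ 0 < t := by
  constructor
  · intro h
    by_contra! ht
    nlinarith [mul_nonpos_of_nonneg_of_nonpos hr ht]
  · intro ht
    nlinarith [mul_le_mul_of_nonneg_left (show (1 : ℤ) ≤ t by omega) hr]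

lemma ite_add_ite_eq_one_of_xor {R : Type*} [AddMonoidWithOne R] {p q : Prop}
    [Decidable p] [Decidable q] (h : Xor p q) :
    ((if p then 1 else 0) + if q then 1 else 0 : R) = 1 := by
  rcases h with ⟨hp, hq⟩ | ⟨hq, hp⟩ <;> simp [hp, hq]

end TwoSMIN

open TwoSMIN in
theorem twoSMIN_reveals_nothing_general (ℓ σ N : ℕ) (hN : 2 ^ (σ + ℓ + 3) < N)
    (x y : ℤ) (hx : |x| ≤ 2 ^ ℓ) (hy : |y| ≤ 2 ^ ℓ)
    (r₁ : ℤ) (hr₁ : 1 ≤ r₁) (hr₁' : r₁ < 2 ^ σ)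
    (r₂ : ℤ) (hr₂' : 2 * r₂ ≤ (N : ℤ))
    (hsum : (N : ℤ) < 2 * (r₁ + r₂))
    (D₀ D₁ : ℤ)
    (hD₀ : D₀ = (r₁ * (x - y + 1) + r₂) % (N : ℤ))
    (hD₁ : D₁ = (r₁ * (y - x) + r₂) % (N : ℤ)) :
    Xor' (2 * D₀ > (N : ℤ)) (2 * D₁ > (N : ℤ)) ∧
      ((if 2 * D₀ > (N : ℤ) then (1 : ℚ) else 0)
        + (if 2 * D₁ > (N : ℤ) then (1 : ℚ) else 0)) / 2 = 1 / 2 := by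
  have hr₁₀ : (0 : ℤ) ≤ r₁ := by linarith
  have hNZ : (2 : ℤ) ^ (σ + ℓ + 3) ≤ N := by exact_mod_cast hN.le
  obtain ⟨hx₁, hx₂⟩ := abs_le.mp hx
  obtain ⟨hy₁, hy₂⟩ := abs_le.mp hy
  have hD₀' : D₀ = r₁ * (x - y + 1) + r₂ :=
    hD₀.trans <| emod_eq_self_of_two_mul_abs_add_lt (two_mul_abs_mul_add_lt_of_abs_le hr₁₀ hr₁'
      hNZ (abs_le.mpr ⟨by linarith, by linarith⟩)) hr₂' hsum
  have hD₁' : D₁ = r₁ * (y - x) + r₂ :=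
    hD₁.trans <| emod_eq_self_of_two_mul_abs_add_lt (two_mul_abs_mul_add_lt_of_abs_le hr₁₀ hr₁'
      hNZ (abs_le.mpr ⟨by linarith, by linarith⟩)) hr₂' hsum
  have hxor : Xor (2 * D₀ > (N : ℤ)) (2 * D₁ > (N : ℤ)) := by
    simp only [gt_iff_lt, hD₀', hD₁', lt_two_mul_mul_add_iff hr₁₀ hr₂' hsum, Xor]
    omega
  refine ⟨hxor, ?_⟩
  rw [ite_add_ite_eq_one_of_xor hxor]

/-- Theorem 2 (the comparison value reveals nothing): exactly one of
`2·D₀ > N` and `2·D₁ > N` holds, hence for a uniformly random bit `π` the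
probability that `2·D_π > N` equals `1/2`, independently of `x` and `y`. -/
theorem twoSMIN_reveals_nothing (ℓ σ N : ℕ) (hN : 2 ^ (σ + ℓ + 3) < N)
    (x y : ℤ) (hx : |x| ≤ 2 ^ ℓ) (hy : |y| ≤ 2 ^ ℓ)
    (r₁ : ℤ) (hr₁ : 1 ≤ r₁) (hr₁' : r₁ < 2 ^ σ)
    (r₂ : ℤ) (hr₂ : 0 < r₂) (hr₂' : 2 * r₂ ≤ (N : ℤ))
    (hsum : (N : ℤ) < 2 * (r₁ + r₂))
    (D₀ D₁ : ℤ)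
    (hD₀ : D₀ = (r₁ * (x - y + 1) + r₂) % (N : ℤ))
    (hD₁ : D₁ = (r₁ * (y - x) + r₂) % (N : ℤ)) :
    Xor' (2 * D₀ > (N : ℤ)) (2 * D₁ > (N : ℤ)) ∧
      ((if 2 * D₀ > (N : ℤ) then (1 : ℚ) else 0)
        + (if 2 * D₁ > (N : ℤ) then (1 : ℚ) else 0)) / 2 = 1 / 2 :=
  twoSMIN_reveals_nothing_general ℓ σ N hN x y hx hy r₁ hr₁ hr₁' r₂ hr₂' hsum D₀ D₁ hD₀ hD₁
end
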